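/- Essence of a coercion is an identity: if σ ≤_T τ in the intersection type theory T (with axioms refl, incl₁, incl₂, glb, trans, ω_top, ω_→, →∩, →), then the coercion term ⟦σ ≤_T τ⟧ is a closed coercion-free Δ-term typable with type σ → τ in Δ^T_{=_{βη}}, and its essence is βη-convertible to λx.x. -/
import Mathlib


set_option autoImplicit true

/-- Intersection types: atoms, the universal type ω, arrows and intersections. -/
inductive Ty : Type
  | atom : ℕ → Ty
  | omega : Ty
  | arr : Ty → Ty → Ty
  | inter : Ty → Ty → Ty
  deriving DecidableEq

/-- Pure λ-terms with named variables. -/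
inductive Lam : Type
  | var : ℕ → Lam
  | lam : ℕ → Lam → Lam
  | app : Lam → Lam → Lam
  deriving DecidableEq

/-- Substitution on pure λ-terms. -/
def Lam.subst : Lam → ℕ → Lam → Lam
  | .var y, x, N => if y = x then N else .var y
  | .lam y M, x, N => if y = x then .lam y M else .lam y (M.subst x N)
  | .app M1 M2, x, N => .app (M1.subst x N) (M2.subst x N)

/-- Free variables of a pure λ-term. -/
def Lam.fv : Lam → Set ℕ
  | .var y => {y}
  | .lam y M => M.fv \ {y}
  | .app M1 M2 => M1.fv ∪ M2.fv

/-- One-step β-reduction on pure λ-terms. -/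
inductive Lam.Step : Lam → Lam → Prop
  | beta (x : ℕ) (M N : Lam) : Lam.Step (.app (.lam x M) N) (M.subst x N)
  | lamC (x : ℕ) {M M' : Lam} : Lam.Step M M' → Lam.Step (.lam x M) (.lam x M')
  | appL {M M' : Lam} (N : Lam) : Lam.Step M M' → Lam.Step (.app M N) (.app M' N)
  | appR (M : Lam) {N N' : Lam} : Lam.Step N N' → Lam.Step (.app M N) (.app M N')

/-- One-step βη-reduction on pure λ-terms. -/
inductive Lam.StepEta : Lam → Lam → Prop
  | beta (x : ℕ) (M N : Lam) : Lam.StepEta (.app (.lam x M) N) (M.subst x N)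
  | eta (x : ℕ) (M : Lam) : x ∉ M.fv → Lam.StepEta (.lam x (.app M (.var x))) M
  | lamC (x : ℕ) {M M' : Lam} : Lam.StepEta M M' → Lam.StepEta (.lam x M) (.lam x M')
  | appL {M M' : Lam} (N : Lam) : Lam.StepEta M M' → Lam.StepEta (.app M N) (.app M' N)
  | appR (M : Lam) {N N' : Lam} : Lam.StepEta N N' → Lam.StepEta (.app M N) (.app M N')

/-- β-convertibility `=_β` on pure λ-terms. -/
def Lam.Beq : Lam → Lam → Prop := Relation.EqvGen Lam.Step

/-- βη-convertibility `=_{βη}` on pure λ-terms. -/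
def Lam.BEeq : Lam → Lam → Prop := Relation.EqvGen Lam.StepEta

/-- Δ-terms: constants `u_Δ`, variables, typed abstractions, applications,
strong pairs, projections and explicit type coercions. -/
inductive DTerm : Type
  | uc : DTerm → DTerm
  | var : ℕ → DTerm
  | lam : ℕ → Ty → DTerm → DTerm
  | app : DTerm → DTerm → DTerm
  | pair : DTerm → DTerm → DTerm
  | pr1 : DTerm → DTerm
  | pr2 : DTerm → DTerm
  | coe : DTerm → Ty → DTerm
  deriving DecidableEq

/-- The essence function, mapping Δ-terms to pure λ-terms. -/
def DTerm.essence : DTerm → Lam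
  | .uc d => d.essence
  | .var x => .var x
  | .lam x _ d => .lam x d.essence
  | .app d1 d2 => .app d1.essence d2.essence
  | .pair d1 _ => d1.essence
  | .pr1 d => d.essence
  | .pr2 d => d.essence
  | .coe d _ => d.essence

/-- Substitution on Δ-terms. -/
def DTerm.subst : DTerm → ℕ → DTerm → DTerm
  | .uc d, x, N => .uc (d.subst x N)
  | .var y, x, N => if y = x then N else .var y
  | .lam y σ d, x, N => if y = x then .lam y σ d else .lam y σ (d.subst x N)
  | .app d1 d2, x, N => .app (d1.subst x N) (d2.subst x N)
  | .pair d1 d2, x, N => .pair (d1.subst x N) (d2.subst x N)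
  | .pr1 d, x, N => .pr1 (d.subst x N)
  | .pr2 d, x, N => .pr2 (d.subst x N)
  | .coe d σ, x, N => .coe (d.subst x N) σ

/-- Free variables of a Δ-term. -/
def DTerm.fv : DTerm → Set ℕ
  | .uc d => d.fv
  | .var y => {y}
  | .lam y _ d => d.fv \ {y}
  | .app d1 d2 => d1.fv ∪ d2.fv
  | .pair d1 d2 => d1.fv ∪ d2.fv
  | .pr1 d => d.fv
  | .pr2 d => d.fv
  | .coe d _ => d.fv

/-- One-step βprᵢ-reduction: contextual closure of (β) and (prᵢ),
not reducing inside the index of a constant `u_Δ`. -/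
inductive DTerm.Step : DTerm → DTerm → Prop
  | beta (x : ℕ) (σ : Ty) (d1 d2 : DTerm) :
      DTerm.Step (.app (.lam x σ d1) d2) (d1.subst x d2)
  | proj1 (d1 d2 : DTerm) : DTerm.Step (.pr1 (.pair d1 d2)) d1
  | proj2 (d1 d2 : DTerm) : DTerm.Step (.pr2 (.pair d1 d2)) d2
  | lamC (x : ℕ) (σ : Ty) {d d' : DTerm} :
      DTerm.Step d d' → DTerm.Step (.lam x σ d) (.lam x σ d')
  | appL {d1 d1' : DTerm} (d2 : DTerm) :
      DTerm.Step d1 d1' → DTerm.Step (.app d1 d2) (.app d1' d2)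
  | appR (d1 : DTerm) {d2 d2' : DTerm} :
      DTerm.Step d2 d2' → DTerm.Step (.app d1 d2) (.app d1 d2')
  | pairL {d1 d1' : DTerm} (d2 : DTerm) :
      DTerm.Step d1 d1' → DTerm.Step (.pair d1 d2) (.pair d1' d2)
  | pairR (d1 : DTerm) {d2 d2' : DTerm} :
      DTerm.Step d2 d2' → DTerm.Step (.pair d1 d2) (.pair d1 d2')
  | pr1C {d d' : DTerm} : DTerm.Step d d' → DTerm.Step (.pr1 d) (.pr1 d')
  | pr2C {d d' : DTerm} : DTerm.Step d d' → DTerm.Step (.pr2 d) (.pr2 d')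
  | coeC (σ : Ty) {d d' : DTerm} : DTerm.Step d d' → DTerm.Step (.coe d σ) (.coe d' σ)

/-- Multistep βprᵢ-reduction. -/
def DTerm.MStep : DTerm → DTerm → Prop := Relation.ReflTransGen DTerm.Step

/-- Parallel reduction `⟹` on Δ-terms. -/
inductive DTerm.Par : DTerm → DTerm → Prop
  | var (x : ℕ) : DTerm.Par (.var x) (.var x)
  | uc (d : DTerm) : DTerm.Par (.uc d) (.uc d)
  | coe (σ : Ty) {d d' : DTerm} : DTerm.Par d d' → DTerm.Par (.coe d σ) (.coe d' σ)
  | app {d1 d1' d2 d2' : DTerm} :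
      DTerm.Par d1 d1' → DTerm.Par d2 d2' → DTerm.Par (.app d1 d2) (.app d1' d2')
  | lam (x : ℕ) (σ : Ty) {d d' : DTerm} :
      DTerm.Par d d' → DTerm.Par (.lam x σ d) (.lam x σ d')
  | beta (x : ℕ) (σ : Ty) {d1 d1' d2 d2' : DTerm} :
      DTerm.Par d1 d1' → DTerm.Par d2 d2' →
      DTerm.Par (.app (.lam x σ d1) d2) (d1'.subst x d2')
  | pair {d1 d1' d2 d2' : DTerm} :
      DTerm.Par d1 d1' → DTerm.Par d2 d2' → DTerm.Par (.pair d1 d2) (.pair d1' d2')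
  | pr1 {d d' : DTerm} : DTerm.Par d d' → DTerm.Par (.pr1 d) (.pr1 d')
  | pr2 {d d' : DTerm} : DTerm.Par d d' → DTerm.Par (.pr2 d) (.pr2 d')
  | proj1 {d1 d1' : DTerm} (d2 : DTerm) :
      DTerm.Par d1 d1' → DTerm.Par (.pr1 (.pair d1 d2)) d1'
  | proj2 (d1 : DTerm) {d2 d2' : DTerm} :
      DTerm.Par d2 d2' → DTerm.Par (.pr2 (.pair d1 d2)) d2'

/-- The complete development `Δ*`: simultaneous contraction of all βprᵢ-redexes. -/
def DTerm.cdev : DTerm → DTerm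
  | .uc d => .uc d
  | .var x => .var x
  | .coe d σ => .coe d.cdev σ
  | .pair d1 d2 => .pair d1.cdev d2.cdev
  | .lam x σ d => .lam x σ d.cdev
  | .app (.lam x _ d1) d2 => d1.cdev.subst x d2.cdev
  | .app d1 d2 => .app d1.cdev d2.cdev
  | .pr1 (.pair d1 _) => d1.cdev
  | .pr1 d => .pr1 d.cdev
  | .pr2 (.pair _ d2) => d2.cdev
  | .pr2 d => .pr2 d.cdev

/-- Synchronous one-step reduction `→∥`: like `→`, except that both components
of a strong pair are reduced simultaneously with syntactically equal essences. -/
inductive DTerm.SStep : DTerm → DTerm → Prop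
  | beta (x : ℕ) (σ : Ty) (d1 d2 : DTerm) :
      DTerm.SStep (.app (.lam x σ d1) d2) (d1.subst x d2)
  | proj1 (d1 d2 : DTerm) : DTerm.SStep (.pr1 (.pair d1 d2)) d1
  | proj2 (d1 d2 : DTerm) : DTerm.SStep (.pr2 (.pair d1 d2)) d2
  | lamC (x : ℕ) (σ : Ty) {d d' : DTerm} :
      DTerm.SStep d d' → DTerm.SStep (.lam x σ d) (.lam x σ d')
  | appL {d1 d1' : DTerm} (d2 : DTerm) :
      DTerm.SStep d1 d1' → DTerm.SStep (.app d1 d2) (.app d1' d2)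
  | appR (d1 : DTerm) {d2 d2' : DTerm} :
      DTerm.SStep d2 d2' → DTerm.SStep (.app d1 d2) (.app d1 d2')
  | pairC {d1 d1' d2 d2' : DTerm} :
      DTerm.SStep d1 d1' → DTerm.SStep d2 d2' →
      d1'.essence = d2'.essence →
      DTerm.SStep (.pair d1 d2) (.pair d1' d2')
  | pr1C {d d' : DTerm} : DTerm.SStep d d' → DTerm.SStep (.pr1 d) (.pr1 d')
  | pr2C {d d' : DTerm} : DTerm.SStep d d' → DTerm.SStep (.pr2 d) (.pr2 d')
  | coeC (σ : Ty) {d d' : DTerm} : DTerm.SStep d d' → DTerm.SStep (.coe d σ) (.coe d' σ)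

/-- One-step η-reduction on Δ-terms (contextual closure). -/
inductive DTerm.EtaStep : DTerm → DTerm → Prop
  | eta (x : ℕ) (σ : Ty) (d : DTerm) :
      x ∉ d.fv → DTerm.EtaStep (.lam x σ (.app d (.var x))) d
  | lamC (x : ℕ) (σ : Ty) {d d' : DTerm} :
      DTerm.EtaStep d d' → DTerm.EtaStep (.lam x σ d) (.lam x σ d')
  | appL {d1 d1' : DTerm} (d2 : DTerm) :
      DTerm.EtaStep d1 d1' → DTerm.EtaStep (.app d1 d2) (.app d1' d2)
  | appR (d1 : DTerm) {d2 d2' : DTerm} :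
      DTerm.EtaStep d2 d2' → DTerm.EtaStep (.app d1 d2) (.app d1 d2')
  | pairL {d1 d1' : DTerm} (d2 : DTerm) :
      DTerm.EtaStep d1 d1' → DTerm.EtaStep (.pair d1 d2) (.pair d1' d2)
  | pairR (d1 : DTerm) {d2 d2' : DTerm} :
      DTerm.EtaStep d2 d2' → DTerm.EtaStep (.pair d1 d2) (.pair d1 d2')
  | pr1C {d d' : DTerm} : DTerm.EtaStep d d' → DTerm.EtaStep (.pr1 d) (.pr1 d')
  | pr2C {d d' : DTerm} : DTerm.EtaStep d d' → DTerm.EtaStep (.pr2 d) (.pr2 d')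
  | coeC (σ : Ty) {d d' : DTerm} : DTerm.EtaStep d d' → DTerm.EtaStep (.coe d σ) (.coe d' σ)

/-- Typing contexts: partial maps from variables to types. -/
def Ctx : Type := ℕ → Option Ty

/-- Context update `B, x:σ`. -/
def Ctx.update (B : Ctx) (x : ℕ) (σ : Ty) : Ctx :=
  fun y => if y = x then some σ else B y

/-- Context inclusion `B ⊆ B'`. -/
def Ctx.Sub (B B' : Ctx) : Prop := ∀ x σ, B x = some σ → B' x = some σ

/-- The generic intersection typed system `Δ^T_R` for the Δ-calculus,
parametrized by whether ω is among the atoms (`oA`), a type theory `le` and an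
equivalence relation `R` on pure λ-terms. -/
inductive Typing (oA : Prop) (le : Ty → Ty → Prop) (R : Lam → Lam → Prop) :
    Ctx → DTerm → Ty → Prop
  | top {B : Ctx} {d : DTerm} : oA → Typing oA le R B (.uc d) .omega
  | ax {B : Ctx} {x : ℕ} {σ : Ty} : B x = some σ → Typing oA le R B (.var x) σ
  | arrI {B : Ctx} {x : ℕ} {σ τ : Ty} {d : DTerm} :
      Typing oA le R (Ctx.update B x σ) d τ → Typing oA le R B (.lam x σ d) (.arr σ τ)
  | arrE {B : Ctx} {σ τ : Ty} {d1 d2 : DTerm} :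
      Typing oA le R B d1 (.arr σ τ) → Typing oA le R B d2 σ →
      Typing oA le R B (.app d1 d2) τ
  | interI {B : Ctx} {σ τ : Ty} {d1 d2 : DTerm} :
      Typing oA le R B d1 σ → Typing oA le R B d2 τ →
      R d1.essence d2.essence →
      Typing oA le R B (.pair d1 d2) (.inter σ τ)
  | interE1 {B : Ctx} {σ τ : Ty} {d : DTerm} :
      Typing oA le R B d (.inter σ τ) → Typing oA le R B (.pr1 d) σ
  | interE2 {B : Ctx} {σ τ : Ty} {d : DTerm} :
      Typing oA le R B d (.inter σ τ) → Typing oA le R B (.pr2 d) τ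
  | sub {B : Ctx} {σ τ : Ty} {d : DTerm} :
      Typing oA le R B d σ → le σ τ → Typing oA le R B (.coe d τ) τ

/-- The intersection type assignment system `λ^T_∩` for pure λ-terms. -/
inductive Assign (oA : Prop) (le : Ty → Ty → Prop) : Ctx → Lam → Ty → Prop
  | top {B : Ctx} {M : Lam} : oA → Assign oA le B M .omega
  | ax {B : Ctx} {x : ℕ} {σ : Ty} : B x = some σ → Assign oA le B (.var x) σ
  | arrI {B : Ctx} {x : ℕ} {σ τ : Ty} {M : Lam} :
      Assign oA le (Ctx.update B x σ) M τ → Assign oA le B (.lam x M) (.arr σ τ)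
  | arrE {B : Ctx} {σ τ : Ty} {M N : Lam} :
      Assign oA le B M (.arr σ τ) → Assign oA le B N σ → Assign oA le B (.app M N) τ
  | interI {B : Ctx} {σ τ : Ty} {M : Lam} :
      Assign oA le B M σ → Assign oA le B M τ → Assign oA le B M (.inter σ τ)
  | interE1 {B : Ctx} {σ τ : Ty} {M : Lam} :
      Assign oA le B M (.inter σ τ) → Assign oA le B M σ
  | interE2 {B : Ctx} {σ τ : Ty} {M : Lam} :
      Assign oA le B M (.inter σ τ) → Assign oA le B M τ
  | sub {B : Ctx} {σ τ : Ty} {M : Lam} :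
      Assign oA le B M σ → le σ τ → Assign oA le B M τ

/-- The Coppo-Dezani-Sallé type theory: minimal theory plus `σ ≤ ω`. -/
inductive LeCDS : Ty → Ty → Prop
  | refl (σ : Ty) : LeCDS σ σ
  | incl1 (σ τ : Ty) : LeCDS (.inter σ τ) σ
  | incl2 (σ τ : Ty) : LeCDS (.inter σ τ) τ
  | glb {ρ σ τ : Ty} : LeCDS ρ σ → LeCDS ρ τ → LeCDS ρ (.inter σ τ)
  | trans {σ τ ρ : Ty} : LeCDS σ τ → LeCDS τ ρ → LeCDS σ ρ
  | omega_top (σ : Ty) : LeCDS σ .omega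

/-- The Barendregt-Coppo-Dezani type theory. -/
inductive LeBCD : Ty → Ty → Prop
  | refl (σ : Ty) : LeBCD σ σ
  | incl1 (σ τ : Ty) : LeBCD (.inter σ τ) σ
  | incl2 (σ τ : Ty) : LeBCD (.inter σ τ) τ
  | glb {ρ σ τ : Ty} : LeBCD ρ σ → LeBCD ρ τ → LeBCD ρ (.inter σ τ)
  | trans {σ τ ρ : Ty} : LeBCD σ τ → LeBCD τ ρ → LeBCD σ ρ
  | omega_top (σ : Ty) : LeBCD σ .omega
  | omega_arr (σ : Ty) : LeBCD .omega (.arr σ .omega)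
  | arr_inter (σ τ ρ : Ty) : LeBCD (.inter (.arr σ τ) (.arr σ ρ)) (.arr σ (.inter τ ρ))
  | arr {σ1 σ2 τ1 τ2 : Ty} :
      LeBCD σ2 σ1 → LeBCD τ1 τ2 → LeBCD (.arr σ1 τ1) (.arr σ2 τ2)

/-- Simple types with pairs: one atom `∘`, arrows and products. -/
inductive STy : Type
  | base : STy
  | arr : STy → STy → STy
  | prod : STy → STy → STy
  deriving DecidableEq

/-- Terms of the simply typed λ-calculus with pairs, a constant `u_∘` and
constants `c_σ` for every simple type `σ`. -/
inductive STerm : Type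
  | var : ℕ → STerm
  | uc : STerm
  | cst : STy → STerm
  | lam : ℕ → STy → STerm → STerm
  | app : STerm → STerm → STerm
  | pair : STerm → STerm → STerm
  | pr1 : STerm → STerm
  | pr2 : STerm → STerm
  deriving DecidableEq

def STerm.subst : STerm → ℕ → STerm → STerm
  | .var y, x, N => if y = x then N else .var y
  | .uc, _, _ => .uc
  | .cst σ, _, _ => .cst σ
  | .lam y σ m, x, N => if y = x then .lam y σ m else .lam y σ (m.subst x N)
  | .app m1 m2, x, N => .app (m1.subst x N) (m2.subst x N)
  | .pair m1 m2, x, N => .pair (m1.subst x N) (m2.subst x N)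
  | .pr1 m, x, N => .pr1 (m.subst x N)
  | .pr2 m, x, N => .pr2 (m.subst x N)

/-- One-step reduction (β and projections) in the target calculus. -/
inductive STerm.Step : STerm → STerm → Prop
  | beta (x : ℕ) (σ : STy) (m1 m2 : STerm) :
      STerm.Step (.app (.lam x σ m1) m2) (m1.subst x m2)
  | proj1 (m1 m2 : STerm) : STerm.Step (.pr1 (.pair m1 m2)) m1
  | proj2 (m1 m2 : STerm) : STerm.Step (.pr2 (.pair m1 m2)) m2
  | lamC (x : ℕ) (σ : STy) {m m' : STerm} :
      STerm.Step m m' → STerm.Step (.lam x σ m) (.lam x σ m')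
  | appL {m1 m1' : STerm} (m2 : STerm) :
      STerm.Step m1 m1' → STerm.Step (.app m1 m2) (.app m1' m2)
  | appR (m1 : STerm) {m2 m2' : STerm} :
      STerm.Step m2 m2' → STerm.Step (.app m1 m2) (.app m1 m2')
  | pairL {m1 m1' : STerm} (m2 : STerm) :
      STerm.Step m1 m1' → STerm.Step (.pair m1 m2) (.pair m1' m2)
  | pairR (m1 : STerm) {m2 m2' : STerm} :
      STerm.Step m2 m2' → STerm.Step (.pair m1 m2) (.pair m1 m2')
  | pr1C {m m' : STerm} : STerm.Step m m' → STerm.Step (.pr1 m) (.pr1 m')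
  | pr2C {m m' : STerm} : STerm.Step m m' → STerm.Step (.pr2 m) (.pr2 m')

def SCtx : Type := ℕ → Option STy

def SCtx.update (Γ : SCtx) (x : ℕ) (σ : STy) : SCtx :=
  fun y => if y = x then some σ else Γ y

/-- Typing in the simply typed λ-calculus with pairs. -/
inductive STyping : SCtx → STerm → STy → Prop
  | var {Γ : SCtx} {x : ℕ} {σ : STy} : Γ x = some σ → STyping Γ (.var x) σ
  | uc {Γ : SCtx} : STyping Γ .uc .base
  | cst {Γ : SCtx} (σ : STy) : STyping Γ (.cst σ) σ
  | lam {Γ : SCtx} {x : ℕ} {σ τ : STy} {m : STerm} :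
      STyping (SCtx.update Γ x σ) m τ → STyping Γ (.lam x σ m) (.arr σ τ)
  | app {Γ : SCtx} {σ τ : STy} {m1 m2 : STerm} :
      STyping Γ m1 (.arr σ τ) → STyping Γ m2 σ → STyping Γ (.app m1 m2) τ
  | pair {Γ : SCtx} {σ τ : STy} {m1 m2 : STerm} :
      STyping Γ m1 σ → STyping Γ m2 τ → STyping Γ (.pair m1 m2) (.prod σ τ)
  | pr1 {Γ : SCtx} {σ τ : STy} {m : STerm} :
      STyping Γ m (.prod σ τ) → STyping Γ (.pr1 m) σ
  | pr2 {Γ : SCtx} {σ τ : STy} {m : STerm} :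
      STyping Γ m (.prod σ τ) → STyping Γ (.pr2 m) τ

/-- The forgetful map `|_|` on intersection types. -/
def mapTy : Ty → STy
  | .atom _ => .base
  | .omega => .base
  | .arr σ τ => .arr (mapTy σ) (mapTy τ)
  | .inter σ τ => .prod (mapTy σ) (mapTy τ)

/-- The forgetful map on contexts. -/
def mapCtx (B : Ctx) : SCtx := fun x => (B x).map mapTy

/-- The forgetful translation `|Δ|_B` of Δ-terms into the simply typed
λ-calculus with pairs, presented as an inductive relation (the coercion case
refers to the typing of the coerced subterm). -/
inductive Forget (oA : Prop) (le : Ty → Ty → Prop) (R : Lam → Lam → Prop) :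
    Ctx → DTerm → STerm → Prop
  | var (B : Ctx) (x : ℕ) : Forget oA le R B (.var x) (.var x)
  | uc (B : Ctx) (d : DTerm) : Forget oA le R B (.uc d) .uc
  | lam {B : Ctx} {x : ℕ} {σ : Ty} {d : DTerm} {m : STerm} :
      Forget oA le R (Ctx.update B x σ) d m →
      Forget oA le R B (.lam x σ d) (.lam x (mapTy σ) m)
  | app {B : Ctx} {d1 d2 : DTerm} {m1 m2 : STerm} :
      Forget oA le R B d1 m1 → Forget oA le R B d2 m2 →
      Forget oA le R B (.app d1 d2) (.app m1 m2)
  | pair {B : Ctx} {d1 d2 : DTerm} {m1 m2 : STerm} :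
      Forget oA le R B d1 m1 → Forget oA le R B d2 m2 →
      Forget oA le R B (.pair d1 d2) (.pair m1 m2)
  | pr1 {B : Ctx} {d : DTerm} {m : STerm} :
      Forget oA le R B d m → Forget oA le R B (.pr1 d) (.pr1 m)
  | pr2 {B : Ctx} {d : DTerm} {m : STerm} :
      Forget oA le R B d m → Forget oA le R B (.pr2 d) (.pr2 m)
  | coe {B : Ctx} {d : DTerm} {m : STerm} {σ τ : Ty} :
      Forget oA le R B d m → Typing oA le R B d σ →
      Forget oA le R B (.coe d τ) (.app (.cst (.arr (mapTy σ) (mapTy τ))) m)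

/-- The (reflexive) subterm relation on Δ-terms; the index of a constant
`u_Δ` is not a subterm. -/
inductive DTerm.IsSubterm : DTerm → DTerm → Prop
  | refl (d : DTerm) : DTerm.IsSubterm d d
  | lam {d' d : DTerm} (x : ℕ) (σ : Ty) :
      DTerm.IsSubterm d' d → DTerm.IsSubterm d' (.lam x σ d)
  | appL {d' d1 : DTerm} (d2 : DTerm) :
      DTerm.IsSubterm d' d1 → DTerm.IsSubterm d' (.app d1 d2)
  | appR (d1 : DTerm) {d' d2 : DTerm} :
      DTerm.IsSubterm d' d2 → DTerm.IsSubterm d' (.app d1 d2)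
  | pairL {d' d1 : DTerm} (d2 : DTerm) :
      DTerm.IsSubterm d' d1 → DTerm.IsSubterm d' (.pair d1 d2)
  | pairR (d1 : DTerm) {d' d2 : DTerm} :
      DTerm.IsSubterm d' d2 → DTerm.IsSubterm d' (.pair d1 d2)
  | pr1 {d' d : DTerm} : DTerm.IsSubterm d' d → DTerm.IsSubterm d' (.pr1 d)
  | pr2 {d' d : DTerm} : DTerm.IsSubterm d' d → DTerm.IsSubterm d' (.pr2 d)
  | coe {d' d : DTerm} (σ : Ty) :
      DTerm.IsSubterm d' d → DTerm.IsSubterm d' (.coe d σ)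

/-- Coercion-free Δ-terms. -/
def DTerm.CoercionFree : DTerm → Prop
  | .uc d => d.CoercionFree
  | .var _ => True
  | .lam _ _ d => d.CoercionFree
  | .app d1 d2 => d1.CoercionFree ∧ d2.CoercionFree
  | .pair d1 d2 => d1.CoercionFree ∧ d2.CoercionFree
  | .pr1 d => d.CoercionFree
  | .pr2 d => d.CoercionFree
  | .coe _ _ => False

/- Auxiliary lemmas -/

lemma BEeq.rfl' (M : Lam) : Lam.BEeq M M := Relation.EqvGen.refl M

lemma BEeq.symm' {M N : Lam} (h : Lam.BEeq M N) : Lam.BEeq N M :=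
  Relation.EqvGen.symm _ _ h

lemma BEeq.trans' {M N P : Lam} (h1 : Lam.BEeq M N) (h2 : Lam.BEeq N P) : Lam.BEeq M P :=
  Relation.EqvGen.trans _ _ _ h1 h2

lemma BEeq.of_step {M N : Lam} (h : Lam.StepEta M N) : Lam.BEeq M N :=
  Relation.EqvGen.rel _ _ h

lemma BEeq.appL {M M' : Lam} (N : Lam) (h : Lam.BEeq M M') :
    Lam.BEeq (.app M N) (.app M' N) := by
  induction h with
  | rel a b hab => exact BEeq.of_step (Lam.StepEta.appL N hab)
  | refl a => exact BEeq.rfl' _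
  | symm a b _ ih => exact BEeq.symm' ih
  | trans a b c _ _ ih1 ih2 => exact BEeq.trans' ih1 ih2

lemma BEeq.appR (M : Lam) {N N' : Lam} (h : Lam.BEeq N N') :
    Lam.BEeq (.app M N) (.app M N') := by
  induction h with
  | rel a b hab => exact BEeq.of_step (Lam.StepEta.appR M hab)
  | refl a => exact BEeq.rfl' _
  | symm a b _ ih => exact BEeq.symm' ih
  | trans a b c _ _ ih1 ih2 => exact BEeq.trans' ih1 ih2

lemma BEeq.lamC (x : ℕ) {M M' : Lam} (h : Lam.BEeq M M') :
    Lam.BEeq (.lam x M) (.lam x M') := by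
  induction h with
  | rel a b hab => exact BEeq.of_step (Lam.StepEta.lamC x hab)
  | refl a => exact BEeq.rfl' _
  | symm a b _ ih => exact BEeq.symm' ih
  | trans a b c _ _ ih1 ih2 => exact BEeq.trans' ih1 ih2

/-- If `e =βη λx.x` then `e M =βη M`. -/
lemma BEeq.id_app {e : Lam} (M : Lam) (h : Lam.BEeq e (.lam 0 (.var 0))) :
    Lam.BEeq (.app e M) M := by
  refine BEeq.trans' (BEeq.appL M h) ?_
  have hb : Lam.StepEta (.app (.lam 0 (.var 0)) M) ((Lam.var 0).subst 0 M) :=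
    Lam.StepEta.beta 0 (.var 0) M
  simpa [Lam.subst] using BEeq.of_step hb

/-- Free variables of the essence are among the free variables of the term. -/
lemma essence_fv (d : DTerm) : d.essence.fv ⊆ d.fv := by
  induction d with
  | uc d ih => simpa [DTerm.essence, DTerm.fv] using ih
  | var x => simp [DTerm.essence, DTerm.fv, Lam.fv]
  | lam x σ d ih =>
      simp only [DTerm.essence, DTerm.fv, Lam.fv]
      exact Set.diff_subset_diff_left ih
  | app d1 d2 ih1 ih2 =>
      simpa [DTerm.essence, DTerm.fv, Lam.fv] using Set.union_subset_union ih1 ih2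
  | pair d1 d2 ih1 ih2 =>
      simp only [DTerm.essence, DTerm.fv]
      exact ih1.trans Set.subset_union_left
  | pr1 d ih => simpa [DTerm.essence, DTerm.fv] using ih
  | pr2 d ih => simpa [DTerm.essence, DTerm.fv] using ih
  | coe d σ ih => simpa [DTerm.essence, DTerm.fv] using ih

lemma notin_essence_fv {d : DTerm} (hd : d.fv = ∅) (x : ℕ) : x ∉ d.essence.fv := by
  intro hx
  have := essence_fv d hx
  rw [hd] at this
  exact this

lemma Ctx.Sub.update' {B B' : Ctx} (h : Ctx.Sub B B') (x : ℕ) (σ : Ty) :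
    Ctx.Sub (Ctx.update B x σ) (Ctx.update B' x σ) := by
  intro y ρ hy
  unfold Ctx.update at *
  by_cases hyx : y = x <;> simp [hyx] at hy ⊢
  · exact hy
  · exact h y ρ hy

lemma Typing.weaken {oA : Prop} {le : Ty → Ty → Prop} {R : Lam → Lam → Prop}
    {B B' : Ctx} {d : DTerm} {σ : Ty}
    (h : Typing oA le R B d σ) (hs : Ctx.Sub B B') : Typing oA le R B' d σ := by
  induction h generalizing B' with
  | top ho => exact Typing.top ho
  | ax hx => exact Typing.ax (hs _ _ hx)
  | arrI _ ih => exact Typing.arrI (ih (hs.update' _ _))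
  | arrE _ _ ih1 ih2 => exact Typing.arrE (ih1 hs) (ih2 hs)
  | interI _ _ hR ih1 ih2 => exact Typing.interI (ih1 hs) (ih2 hs) hR
  | interE1 _ ih => exact Typing.interE1 (ih hs)
  | interE2 _ ih => exact Typing.interE2 (ih hs)
  | sub _ hle ih => exact Typing.sub (ih hs) hle

lemma empty_sub (B : Ctx) : Ctx.Sub (fun _ => none) B := by
  intro x σ h; simp at h

/-- the essence of a coercion is an identity: every subtyping
`σ ≤_T τ` (in the full theory with refl, incl, glb, trans, ω_top, ω_→, →∩, →)
is realized by a closed coercion-free Δ-term of type `σ → τ` in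
`Δ^T_{=_{βη}}` whose essence is βη-convertible to `λx.x`. -/
theorem coercion_essence_identity (σ τ : Ty) (h : LeBCD σ τ) :
    ∃ Δ : DTerm, DTerm.CoercionFree Δ ∧ Δ.fv = ∅ ∧
      Typing True LeBCD Lam.BEeq (fun _ => none) Δ (.arr σ τ) ∧
      Lam.BEeq Δ.essence (.lam 0 (.var 0)) := by
  induction h with
  | refl σ =>
      refine ⟨.lam 0 σ (.var 0), trivial, ?_, ?_, ?_⟩
      · simp [DTerm.fv]
      · exact Typing.arrI (Typing.ax (by simp [Ctx.update]))
      · exact BEeq.rfl' _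
  | incl1 σ τ =>
      refine ⟨.lam 0 (.inter σ τ) (.pr1 (.var 0)), trivial, ?_, ?_, ?_⟩
      · simp [DTerm.fv]
      · exact Typing.arrI (Typing.interE1 (Typing.ax (σ := Ty.inter σ τ) (by simp [Ctx.update])))
      · exact BEeq.rfl' _
  | incl2 σ τ =>
      refine ⟨.lam 0 (.inter σ τ) (.pr2 (.var 0)), trivial, ?_, ?_, ?_⟩
      · simp [DTerm.fv]
      · exact Typing.arrI (Typing.interE2 (Typing.ax (σ := Ty.inter σ τ) (by simp [Ctx.update])))
      · exact BEeq.rfl' _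
  | @glb ρ σ τ h1 h2 ih1 ih2 =>
      obtain ⟨D1, cf1, fv1, ty1, e1⟩ := ih1
      obtain ⟨D2, cf2, fv2, ty2, e2⟩ := ih2
      refine ⟨.lam 0 ρ (.pair (.app D1 (.var 0)) (.app D2 (.var 0))),
        ⟨⟨cf1, trivial⟩, ⟨cf2, trivial⟩⟩, ?_, ?_, ?_⟩
      · simp [DTerm.fv, fv1, fv2]
      · refine Typing.arrI (Typing.interI
          (Typing.arrE (ty1.weaken (empty_sub _)) (Typing.ax (by simp [Ctx.update])))
          (Typing.arrE (ty2.weaken (empty_sub _)) (Typing.ax (by simp [Ctx.update])))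
          ?_)
        exact BEeq.trans' (BEeq.id_app _ e1) (BEeq.symm' (BEeq.id_app _ e2))
      · show Lam.BEeq (.lam 0 (.app D1.essence (.var 0))) _
        refine BEeq.trans' ?_ e1
        exact BEeq.of_step (Lam.StepEta.eta 0 _ (notin_essence_fv fv1 0))
  | @trans σ τ ρ h1 h2 ih1 ih2 =>
      obtain ⟨D1, cf1, fv1, ty1, e1⟩ := ih1
      obtain ⟨D2, cf2, fv2, ty2, e2⟩ := ih2
      refine ⟨.lam 0 σ (.app D2 (.app D1 (.var 0))), ⟨cf2, cf1, trivial⟩, ?_, ?_, ?_⟩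
      · simp [DTerm.fv, fv1, fv2]
      · exact Typing.arrI (Typing.arrE (ty2.weaken (empty_sub _))
          (Typing.arrE (ty1.weaken (empty_sub _)) (Typing.ax (by simp [Ctx.update]))))
      · show Lam.BEeq (.lam 0 (.app D2.essence (.app D1.essence (.var 0)))) _
        refine BEeq.lamC 0 ?_
        refine BEeq.trans' (BEeq.id_app _ e2) (BEeq.id_app _ e1)
  | omega_top σ =>
      refine ⟨.lam 0 σ (.uc (.var 0)), trivial, ?_, ?_, ?_⟩
      · simp [DTerm.fv]
      · exact Typing.arrI (Typing.top trivial)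
      · exact BEeq.rfl' _
  | omega_arr σ =>
      refine ⟨.lam 0 .omega (.lam 1 σ (.uc (.app (.var 0) (.var 1)))),
        ⟨trivial, trivial⟩, ?_, ?_, ?_⟩
      · simp [DTerm.fv]
      · exact Typing.arrI (Typing.arrI (Typing.top trivial))
      · show Lam.BEeq (.lam 0 (.lam 1 (.app (.var 0) (.var 1)))) _
        refine BEeq.lamC 0 ?_
        exact BEeq.of_step (Lam.StepEta.eta 1 (.var 0) (by simp [Lam.fv]))
  | arr_inter σ τ ρ =>
      refine ⟨.lam 0 (.inter (.arr σ τ) (.arr σ ρ)) (.lam 1 σ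
          (.pair (.app (.pr1 (.var 0)) (.var 1)) (.app (.pr2 (.var 0)) (.var 1)))),
        ⟨⟨trivial, trivial⟩, ⟨trivial, trivial⟩⟩, ?_, ?_, ?_⟩
      · simp [DTerm.fv]
      · refine Typing.arrI (Typing.arrI (Typing.interI
          (Typing.arrE (σ := σ)
            (Typing.interE1 (τ := Ty.arr σ ρ)
              (Typing.ax (σ := Ty.inter (.arr σ τ) (.arr σ ρ)) ?_)) (Typing.ax ?_))
          (Typing.arrE (σ := σ)
            (Typing.interE2 (σ := Ty.arr σ τ)
              (Typing.ax (σ := Ty.inter (.arr σ τ) (.arr σ ρ)) ?_)) (Typing.ax ?_))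
          (BEeq.rfl' _))) <;> simp [Ctx.update]
      · show Lam.BEeq (.lam 0 (.lam 1 (.app (.var 0) (.var 1)))) _
        refine BEeq.lamC 0 ?_
        exact BEeq.of_step (Lam.StepEta.eta 1 (.var 0) (by simp [Lam.fv]))
  | @arr σ1 σ2 τ1 τ2 hσ hτ ihσ ihτ =>
      obtain ⟨Ds, cfs, fvs, tys, es⟩ := ihσ
      obtain ⟨Dt, cft, fvt, tyt, et⟩ := ihτ
      refine ⟨.lam 0 (.arr σ1 τ1) (.lam 1 σ2
          (.app Dt (.app (.var 0) (.app Ds (.var 1))))),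
        ⟨cft, trivial, cfs, trivial⟩, ?_, ?_, ?_⟩
      · simp [DTerm.fv, fvs, fvt]
      · refine Typing.arrI (Typing.arrI (Typing.arrE (tyt.weaken (empty_sub _))
          (Typing.arrE (Typing.ax ?_)
            (Typing.arrE (tys.weaken (empty_sub _)) (Typing.ax ?_))))) <;>
          simp [Ctx.update]
      · show Lam.BEeq (.lam 0 (.lam 1
          (.app Dt.essence (.app (.var 0) (.app Ds.essence (.var 1)))))) _
        refine BEeq.lamC 0 ?_
        refine BEeq.trans' (BEeq.lamC 1 ?_)
          (BEeq.of_step (Lam.StepEta.eta 1 (.var 0) (by simp [Lam.fv])))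
        refine BEeq.trans' (BEeq.id_app _ et) ?_
        exact BEeq.appR _ (BEeq.id_app _ es)
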